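/- Let m, κ ∈ ℕ with 1 ≤ κ ≤ m and let r > 0 with r² ≤ 3κ/m. Let α = (α_1, …, α_m) be distributed uniformly on the hypercube [−r, r]^m (product of uniform distributions on [−r, r]), and let d : {1, −1}^m → [−1, 1] be any family of coefficients. Then E[ ( Σ_{ω ∈ {1,−1}^m : #sin(ω) ≥ κ} Φ_ω(α) d_ω )² ] ≤ (e m r² / (3κ))^κ. -/

import Mathlib

/-!
The functions `Φ_ω` are orthogonal in `L²` of the uniform measure on `[−r, r]^m`: they factor
over the coordinates, and for `ω ≠ ω'` some coordinate contributes `E[sin α_i cos α_i] = 0`.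
Hence the mean square is `∑ d_ω² E[Φ_ω²] ≤ ∑_{#sin ω ≥ κ} σ^{#sin ω}` with `σ = r²/3`, because
`E[sin² α_i] ≤ E[α_i²] = r²/3` and `E[cos² α_i] ≤ 1`. For every `t ≥ 1` this tail sum is at most
`t^{−κ} ∑_ω (tσ)^{#sin ω} = t^{−κ} (1 + tσ)^m ≤ t^{−κ} e^{mtσ}`, and `t = κ/(mσ)` gives
`(e m σ/κ)^κ`.
-/

open MeasureTheory

/-- The path coefficient `Φ_ω(α) = ∏_i φ_{ω_i}(α_i)` where a `true` entry of `ω` stands for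
`ω_i = −1` (a sine factor) and a `false` entry for `ω_i = 1` (a cosine factor). -/
noncomputable def pathCoeff (m : ℕ) (ω : Fin m → Bool) (α : Fin m → ℝ) : ℝ :=
  ∏ i, if ω i then Real.sin (α i) else Real.cos (α i)

/-- `#sin(ω)`: the number of sine factors (entries `ω_i = −1`, encoded as `true`). -/
def numSin (m : ℕ) (ω : Fin m → Bool) : ℕ :=
  (Finset.univ.filter (fun i => ω i = true)).card

/-- The uniform probability measure on the interval `[−r, r]`. -/
noncomputable def uniformIcc (r : ℝ) : Measure ℝ :=
  (ENNReal.ofReal (2 * r))⁻¹ • volume.restrict (Set.Icc (-r) r)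

open Finset

section Orthogonal

variable {ι α : Type*} [MeasurableSpace α] {μ : Measure α}

theorem integral_sum_mul_sq_of_orthogonal (s : Finset ι) (f : ι → α → ℝ) (c : ι → ℝ)
    (hf : ∀ i ∈ s, MemLp (f i) 2 μ)
    (horth : ∀ i ∈ s, ∀ j ∈ s, i ≠ j → ∫ x, f i x * f j x ∂μ = 0) :
    ∫ x, (∑ i ∈ s, f i x * c i) ^ 2 ∂μ = ∑ i ∈ s, c i ^ 2 * ∫ x, f i x ^ 2 ∂μ := by
  have hint : ∀ i ∈ s, ∀ j ∈ s, Integrable (fun x => c i * c j * (f i x * f j x)) μ :=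
    fun i hi j hj => ((hf i hi).integrable_mul (hf j hj)).const_mul _
  calc ∫ x, (∑ i ∈ s, f i x * c i) ^ 2 ∂μ
      = ∫ x, ∑ i ∈ s, ∑ j ∈ s, c i * c j * (f i x * f j x) ∂μ := by
        congr 1 with x
        rw [sq, sum_mul_sum]
        exact sum_congr rfl fun i _ => sum_congr rfl fun j _ => by ring
    _ = ∑ i ∈ s, ∑ j ∈ s, c i * c j * ∫ x, f i x * f j x ∂μ := by
        rw [integral_finsetSum _ fun i hi => integrable_finsetSum _ (hint i hi)]
        refine sum_congr rfl fun i hi => ?_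
        rw [integral_finsetSum _ (hint i hi)]
        exact sum_congr rfl fun j _ => integral_const_mul _ _
    _ = ∑ i ∈ s, c i ^ 2 * ∫ x, f i x ^ 2 ∂μ := by
        refine sum_congr rfl fun i hi => ?_
        rw [sum_eq_single_of_mem i hi fun j hj hji => by rw [horth i hi j hj hji.symm, mul_zero]]
        simp only [sq]

end Orthogonal

section Chernoff

variable {m : ℕ}

lemma pow_numSin_eq_prod (x : ℝ) (ω : Fin m → Bool) :
    x ^ numSin m ω = ∏ i, if ω i then x else 1 := by
  rw [prod_ite, prod_const, prod_const, one_pow, mul_one, numSin]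

lemma sum_pow_numSin (x : ℝ) : ∑ ω : Fin m → Bool, x ^ numSin m ω = (x + 1) ^ m := by
  simp_rw [pow_numSin_eq_prod, ← Fintype.prod_sum fun (_ : Fin m) (b : Bool) => if b then x else 1,
    Fintype.sum_bool, if_true, Bool.false_eq_true, if_false, prod_const, card_univ,
    Fintype.card_fin]

lemma sum_filter_pow_numSin_le (κ : ℕ) {σ t : ℝ} (hσ : 0 ≤ σ) (ht : 1 ≤ t) :
    ∑ ω ∈ univ.filter (fun ω : Fin m → Bool => κ ≤ numSin m ω), σ ^ numSin m ω
      ≤ (t * σ + 1) ^ m / t ^ κ := by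
  have ht0 : 0 < t := one_pos.trans_le ht
  calc ∑ ω ∈ univ.filter (fun ω : Fin m → Bool => κ ≤ numSin m ω), σ ^ numSin m ω
      ≤ ∑ ω ∈ univ.filter (fun ω : Fin m → Bool => κ ≤ numSin m ω),
          (t * σ) ^ numSin m ω / t ^ κ := by
        refine sum_le_sum fun ω hω => ?_
        rw [le_div_iff₀ (by positivity), mul_pow, mul_comm]
        exact mul_le_mul_of_nonneg_right (pow_le_pow_right₀ ht (mem_filter.1 hω).2)
          (by positivity)
    _ ≤ ∑ ω : Fin m → Bool, (t * σ) ^ numSin m ω / t ^ κ :=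
        sum_le_sum_of_subset_of_nonneg (filter_subset _ _) fun _ _ _ => by positivity
    _ = (t * σ + 1) ^ m / t ^ κ := by rw [← sum_div, sum_pow_numSin]

lemma sum_filter_pow_numSin_le_exp_mul {κ : ℕ} {σ : ℝ} (hm : 0 < m) (hσ : 0 < σ)
    (hmσ : m * σ ≤ κ) :
    ∑ ω ∈ univ.filter (fun ω : Fin m → Bool => κ ≤ numSin m ω), σ ^ numSin m ω
      ≤ (Real.exp 1 * m * σ / κ) ^ κ := by
  have hmσ0 : 0 < (m : ℝ) * σ := by positivity
  have hκ : (0 : ℝ) < κ := hmσ0.trans_le hmσ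
  -- the Chernoff parameter `t = κ / (m σ)` minimises `exp (m t σ) / t ^ κ`
  set t : ℝ := κ / (m * σ)
  have hmt : m * (t * σ) = κ := by simp only [t]; field_simp
  calc _ ≤ (t * σ + 1) ^ m / t ^ κ :=
        sum_filter_pow_numSin_le κ hσ.le ((one_le_div hmσ0).2 hmσ)
    _ ≤ Real.exp (t * σ) ^ m / t ^ κ := by
        gcongr
        exact Real.add_one_le_exp _
    _ = (Real.exp 1 * m * σ / κ) ^ κ := by
        rw [← Real.exp_nat_mul, hmt, ← Real.exp_one_pow, ← div_pow]
        simp only [t, div_div_eq_mul_div, mul_assoc]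

end Chernoff

section Uniform

variable {r : ℝ}

lemma isProbabilityMeasure_uniformIcc (hr : 0 < r) : IsProbabilityMeasure (uniformIcc r) := by
  constructor
  rw [uniformIcc, Measure.smul_apply, Measure.restrict_apply_univ, Real.volume_Icc,
    sub_neg_eq_add, ← two_mul, smul_eq_mul]
  exact ENNReal.inv_mul_cancel (by simpa using hr) ENNReal.ofReal_ne_top

lemma integral_uniformIcc (hr : 0 ≤ r) (f : ℝ → ℝ) :
    ∫ x, f x ∂uniformIcc r = (2 * r)⁻¹ * ∫ x in -r..r, f x := by
  rw [uniformIcc, integral_smul_measure, ENNReal.toReal_inv, ENNReal.toReal_ofReal (by linarith),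
    smul_eq_mul, integral_Icc_eq_integral_Ioc, intervalIntegral.integral_of_le (by linarith)]

lemma integral_sin_mul_cos_uniformIcc (hr : 0 ≤ r) :
    ∫ x, Real.sin x * Real.cos x ∂uniformIcc r = 0 := by
  simp [integral_uniformIcc hr, integral_sin_mul_cos₁]

lemma integral_sin_sq_uniformIcc_le (hr : 0 < r) :
    ∫ x, Real.sin x ^ 2 ∂uniformIcc r ≤ r ^ 2 / 3 := by
  have hsin : ∫ x in -r..r, Real.sin x ^ 2 ≤ ∫ x in -r..r, x ^ 2 :=
    intervalIntegral.integral_mono_on (by linarith)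
      (Continuous.intervalIntegrable (by fun_prop) _ _)
      (Continuous.intervalIntegrable (by fun_prop) _ _)
      fun x _ => by simpa only [sq] using Real.sin_sq_le_sq
  calc ∫ x, Real.sin x ^ 2 ∂uniformIcc r ≤ (2 * r)⁻¹ * ∫ x in -r..r, x ^ 2 := by
        rw [integral_uniformIcc hr.le]
        gcongr
    _ = r ^ 2 / 3 := by
        rw [integral_pow]
        field_simp
        ring

lemma integral_cos_sq_uniformIcc_le (hr : 0 < r) :
    ∫ x, Real.cos x ^ 2 ∂uniformIcc r ≤ 1 := by
  have := isProbabilityMeasure_uniformIcc hr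
  calc ∫ x, Real.cos x ^ 2 ∂uniformIcc r ≤ ∫ _, (1 : ℝ) ∂uniformIcc r :=
        integral_mono_of_nonneg (ae_of_all _ fun _ => sq_nonneg _) (integrable_const 1)
          (ae_of_all _ fun x => Real.cos_sq_le_one x)
    _ = 1 := by simp

end Uniform

section PathCoeff

variable {m : ℕ}

noncomputable def pathFactor (b : Bool) (x : ℝ) : ℝ :=
  if b then Real.sin x else Real.cos x

lemma pathCoeff_eq_prod (ω : Fin m → Bool) (α : Fin m → ℝ) :
    pathCoeff m ω α = ∏ i, pathFactor (ω i) (α i) := rfl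

lemma continuous_pathFactor (b : Bool) : Continuous (pathFactor b) := by
  cases b
  exacts [Real.continuous_cos, Real.continuous_sin]

lemma abs_pathFactor_le_one (b : Bool) (x : ℝ) : |pathFactor b x| ≤ 1 := by
  cases b
  exacts [Real.abs_cos_le_one x, Real.abs_sin_le_one x]

lemma memLp_pathCoeff {μ : Measure (Fin m → ℝ)} [IsFiniteMeasure μ] (ω : Fin m → Bool)
    (p : ENNReal) : MemLp (pathCoeff m ω) p μ := by
  have hcont : Continuous (pathCoeff m ω) :=
    continuous_finsetProd _ fun i _ => (continuous_pathFactor _).comp (continuous_apply i)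
  have hbound (α : Fin m → ℝ) : ‖pathCoeff m ω α‖ ≤ 1 := by
    rw [Real.norm_eq_abs, pathCoeff_eq_prod, abs_prod]
    exact prod_le_one (fun _ _ => abs_nonneg _) fun i _ => abs_pathFactor_le_one _ _
  exact (memLp_top_of_bound hcont.aestronglyMeasurable 1 (ae_of_all _ hbound)).mono_exponent
    le_top

variable {r : ℝ}

lemma integral_pathFactor_mul_of_ne (hr : 0 ≤ r) {b b' : Bool} (h : b ≠ b') :
    ∫ x, pathFactor b x * pathFactor b' x ∂uniformIcc r = 0 := by
  cases b <;> cases b' <;> simp only [ne_eq, not_true_eq_false] at h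
  · simp_rw [pathFactor, Bool.false_eq_true, if_false, if_true, mul_comm (Real.cos _)]
    exact integral_sin_mul_cos_uniformIcc hr
  · simp_rw [pathFactor, Bool.false_eq_true, if_false, if_true]
    exact integral_sin_mul_cos_uniformIcc hr

lemma integral_pathFactor_sq_le (hr : 0 < r) (b : Bool) :
    ∫ x, pathFactor b x ^ 2 ∂uniformIcc r ≤ if b then r ^ 2 / 3 else 1 := by
  cases b
  exacts [integral_cos_sq_uniformIcc_le hr, integral_sin_sq_uniformIcc_le hr]

lemma integral_pathCoeff_mul (hr : 0 < r) (ω ω' : Fin m → Bool) :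
    ∫ α, pathCoeff m ω α * pathCoeff m ω' α ∂Measure.pi (fun _ => uniformIcc r)
      = ∏ i, ∫ x, pathFactor (ω i) x * pathFactor (ω' i) x ∂uniformIcc r := by
  have := isProbabilityMeasure_uniformIcc hr
  simp_rw [pathCoeff_eq_prod, ← prod_mul_distrib]
  exact integral_fintype_prod_eq_prod fun i x => pathFactor (ω i) x * pathFactor (ω' i) x

lemma integral_pathCoeff_mul_of_ne (hr : 0 < r) {ω ω' : Fin m → Bool} (h : ω ≠ ω') :
    ∫ α, pathCoeff m ω α * pathCoeff m ω' α ∂Measure.pi (fun _ => uniformIcc r) = 0 := by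
  obtain ⟨i, hi⟩ := Function.ne_iff.1 h
  rw [integral_pathCoeff_mul hr]
  exact prod_eq_zero (mem_univ i) (integral_pathFactor_mul_of_ne hr.le hi)

lemma integral_pathCoeff_sq_le (hr : 0 < r) (ω : Fin m → Bool) :
    ∫ α, pathCoeff m ω α ^ 2 ∂Measure.pi (fun _ => uniformIcc r) ≤ (r ^ 2 / 3) ^ numSin m ω := by
  simp_rw [sq, integral_pathCoeff_mul hr, pow_numSin_eq_prod, ← sq]
  exact prod_le_prod (fun _ _ => integral_nonneg fun _ => sq_nonneg _)
    fun i _ => integral_pathFactor_sq_le hr (ω i)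

end PathCoeff

/-- Mean square truncation error for uniformly distributed uncorrelated
parameters: if `α` is uniform on `[−r, r]^m` with `r² ≤ 3κ/m`, then for any coefficients
`d_ω ∈ [−1,1]`, `E[(Σ_{#sin(ω) ≥ κ} Φ_ω(α) d_ω)²] ≤ (e m r²/(3κ))^κ`. -/
theorem mse_truncation_uniform (m κ : ℕ) (hκ1 : 1 ≤ κ) (hκm : κ ≤ m)
    (r : ℝ) (hr : 0 < r) (hr2 : r ^ 2 ≤ 3 * (κ : ℝ) / (m : ℝ))
    (d : (Fin m → Bool) → ℝ) (hd : ∀ ω, |d ω| ≤ 1) :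
    ∫ α, (∑ ω ∈ Finset.univ.filter (fun ω => κ ≤ numSin m ω),
          pathCoeff m ω α * d ω) ^ 2 ∂(Measure.pi fun _ : Fin m => uniformIcc r)
      ≤ (Real.exp 1 * (m : ℝ) * r ^ 2 / (3 * (κ : ℝ))) ^ κ := by
  have := isProbabilityMeasure_uniformIcc hr
  have hm : 0 < m := by omega
  have hmσ : m * (r ^ 2 / 3) ≤ κ := by
    rw [le_div_iff₀ (by positivity)] at hr2
    linarith
  rw [integral_sum_mul_sq_of_orthogonal _ _ _ (fun ω _ => memLp_pathCoeff ω 2)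
    fun ω _ ω' _ h => integral_pathCoeff_mul_of_ne hr h]
  calc _ ≤ ∑ ω ∈ univ.filter (fun ω => κ ≤ numSin m ω), (r ^ 2 / 3) ^ numSin m ω :=
        sum_le_sum fun ω _ => (mul_le_of_le_one_left (integral_nonneg fun _ => sq_nonneg _)
          (sq_le_one_iff_abs_le_one _ |>.2 (hd ω))).trans (integral_pathCoeff_sq_le hr ω)
    _ ≤ (Real.exp 1 * m * (r ^ 2 / 3) / κ) ^ κ :=
        sum_filter_pow_numSin_le_exp_mul hm (by positivity) hmσ
    _ = _ := by ring
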